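/- arXiv:2403.05312 — 2 statements merged into one kernel-verified Lean document; each statement's English description precedes it below -/
import Mathlib

section
/- Let Γ be a discrete group, (Ω,ν) a probability space, Γ ↷σ (Ω,ν) a p.m.p. action and 1 ≤ p < ∞. If c ∈ Z^1(σ;𝕋) is the limit in Z^1(σ;𝕋) of a net of 1-coboundaries, then the isometric representation π_{p,σ,c} of Γ on L^p(Ω,ν) admits a net of almost invariant unit vectors. -/
/-!
If `b = ∂φ` is a coboundary, the unimodular function `φ` is a unit vector of `L^p` with
`π_{p,σ,c}(t) φ - φ = (c_t - b_t) · φ ∘ t⁻¹`, hence `‖π_{p,σ,c}(t) φ - φ‖_p = ‖c_t - b_t‖_p`.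
For a net of coboundaries `b_i → c`, the differences `c_t - b_{i,t}` tend to `0` in measure and
are bounded by `2`, so on a probability space they tend to `0` in `L^p` for `p < ∞`; the
functions `φ_i` are the almost invariant unit vectors.
-/

open MeasureTheory Filter Topology ENNReal

/-- A probability-measure-preserving action of a discrete group `Γ` on `(Ω, ν)`. -/
structure PMPAction (Γ : Type*) [Group Γ] (Ω : Type*) [MeasurableSpace Ω]
    (ν : MeasureTheory.Measure Ω) where
  act : Γ → Ω → Ω
  act_one : act 1 = id
  act_mul : ∀ s t : Γ, act (s * t) = act s ∘ act t
  measurable_act : ∀ t : Γ, Measurable (act t)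
  measurePreserving_act : ∀ t : Γ, MeasurePreserving (act t) ν ν

namespace PMPAction

variable {Γ : Type*} [Group Γ] {Ω : Type*} [MeasurableSpace Ω] {ν : MeasureTheory.Measure Ω}

/-- The translate `t.A` of a set `A`, i.e. the image of `A` under the action of `t`. -/
def smulSet (σ : PMPAction Γ Ω ν) (t : Γ) (A : Set Ω) : Set Ω := σ.act t⁻¹ ⁻¹' A

/-- Ergodicity: every `Γ`-invariant measurable set is null or co-null. -/
def IsErgodic (σ : PMPAction Γ Ω ν) : Prop :=
  ∀ A : Set Ω, MeasurableSet A → (∀ t : Γ, ν (symmDiff (σ.smulSet t A) A) = 0) →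
    ν A = 0 ∨ ν Aᶜ = 0

end PMPAction

/-- The topology of convergence in measure on `L⁰(Ω,ν;𝕋)`. -/
def cimTopology {Ω : Type*} [MeasurableSpace Ω] (ν : MeasureTheory.Measure Ω) :
    TopologicalSpace (Ω →ₘ[ν] Circle) :=
  TopologicalSpace.generateFrom
    {U | ∃ (φ₀ : Ω →ₘ[ν] Circle) (ε : ℝ), 0 < ε ∧
      U = {φ | ν {ω | ε ≤ ‖(φ ω : ℂ) - (φ₀ ω : ℂ)‖} < ENNReal.ofReal ε}}

/-- The set of `𝕋`-valued 1-cocycles for the action `σ`, inside `L⁰(Ω,ν;𝕋)^Γ`. -/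
def Z1set {Γ : Type*} [Group Γ] {Ω : Type*} [MeasurableSpace Ω] {ν : MeasureTheory.Measure Ω}
    (σ : PMPAction Γ Ω ν) : Set (Γ → (Ω →ₘ[ν] Circle)) :=
  {c | ∀ s t : Γ, ⇑(c (s * t)) =ᵐ[ν] fun ω => c s ω * c t (σ.act s⁻¹ ω)}

/-- The set of `𝕋`-valued 1-coboundaries for the action `σ`. -/
def B1set {Γ : Type*} [Group Γ] {Ω : Type*} [MeasurableSpace Ω] {ν : MeasureTheory.Measure Ω}
    (σ : PMPAction Γ Ω ν) : Set (Γ → (Ω →ₘ[ν] Circle)) :=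
  {c | c ∈ Z1set σ ∧ ∃ φ : Ω →ₘ[ν] Circle,
    ∀ t : Γ, ⇑(c t) =ᵐ[ν] fun ω => φ ω * (φ (σ.act t⁻¹ ω))⁻¹}

variable {Γ : Type*} [Group Γ] {Ω : Type*} [MeasurableSpace Ω] {ν : MeasureTheory.Measure Ω}

universe u v

section BoundedConvergence

variable {Ω E : Type*} [MeasurableSpace Ω] {ν : Measure Ω} [IsProbabilityMeasure ν]
  [NormedAddCommGroup E] {p : ℝ≥0∞}

lemma eLpNorm_le_ofReal_add_mul_measure_rpow (hp : 1 ≤ p) {f : Ω → E}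
    (hf : StronglyMeasurable f) {C δ : ℝ} (hbd : ∀ ω, ‖f ω‖ ≤ C) (hδ : 0 ≤ δ) :
    eLpNorm f p ν ≤ ENNReal.ofReal δ + ENNReal.ofReal C * ν {ω | δ ≤ ‖f ω‖} ^ (1 / p.toReal) := by
  set B := {ω | δ ≤ ‖f ω‖}
  have hB : MeasurableSet B := measurableSet_le measurable_const hf.norm.measurable
  have hC : 0 ≤ C :=
    have := nonempty_of_isProbabilityMeasure ν
    (norm_nonneg _).trans (hbd (Classical.arbitrary _))
  calc eLpNorm f p ν ≤ eLpNorm ((fun _ => δ) + B.indicator fun _ => C) p ν := by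
        refine eLpNorm_mono_real fun ω => ?_
        by_cases h : ω ∈ B
        · simp only [Pi.add_apply, Set.indicator_of_mem h]
          linarith [hbd ω]
        · simp only [Pi.add_apply, Set.indicator_of_notMem h, add_zero]
          exact (not_le.1 h).le
    _ ≤ eLpNorm (fun _ => δ) p ν + eLpNorm (B.indicator fun _ => C) p ν :=
        eLpNorm_add_le aestronglyMeasurable_const
          (stronglyMeasurable_const.indicator hB).aestronglyMeasurable hp
    _ ≤ ENNReal.ofReal δ + ENNReal.ofReal C * ν B ^ (1 / p.toReal) := by
        gcongr
        · simp [eLpNorm_const _ (zero_lt_one.trans_le hp).ne' (IsProbabilityMeasure.ne_zero ν),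
            Real.enorm_of_nonneg hδ]
        · simpa [Real.enorm_of_nonneg hC] using
            eLpNorm_indicator_const_le (μ := ν) (s := B) (c := C) p

theorem MeasureTheory.TendstoInMeasure.tendsto_eLpNorm_sub_of_bounded {ι : Type*} {l : Filter ι}
    (hp : 1 ≤ p) (hp_top : p ≠ ∞) {F : ι → Ω → E} {g : Ω → E}
    (hF : ∀ i, StronglyMeasurable (F i)) (hg : StronglyMeasurable g) {C : ℝ}
    (hbd : ∀ i ω, ‖F i ω - g ω‖ ≤ C) (h : TendstoInMeasure ν F l g) :
    Tendsto (fun i => eLpNorm (F i - g) p ν) l (𝓝 0) := by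
  have hp_pos : 0 < p.toReal := ENNReal.toReal_pos (zero_lt_one.trans_le hp).ne' hp_top
  rw [ENNReal.tendsto_nhds_zero]
  intro ε hε
  rcases eq_top_or_lt_top ε with rfl | hε_top
  · exact .of_forall fun _ => le_top
  set δ := (ε / 2).toReal
  have hδε : ENNReal.ofReal δ ≤ ε / 2 := ENNReal.ofReal_toReal_le
  have hε2 : 0 < ε / 2 := ENNReal.half_pos hε.ne'
  have hδ : 0 < δ := ENNReal.toReal_pos hε2.ne' (by finiteness)
  have hsmall : Tendsto (fun i => ENNReal.ofReal C * ν {ω | δ ≤ ‖F i ω - g ω‖} ^ (1 / p.toReal))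
      l (𝓝 0) := by
    have := ENNReal.Tendsto.const_mul
      (((ENNReal.continuous_rpow_const (y := 1 / p.toReal)).tendsto 0).comp
        ((tendstoInMeasure_iff_norm.1 h) δ hδ)) (a := ENNReal.ofReal C) (.inr ENNReal.ofReal_ne_top)
    rwa [ENNReal.zero_rpow_of_pos (one_div_pos.2 hp_pos), mul_zero] at this
  filter_upwards [(ENNReal.tendsto_nhds_zero.1 hsmall) (ε / 2) hε2] with i hi
  calc eLpNorm (F i - g) p ν
      ≤ ENNReal.ofReal δ + ENNReal.ofReal C * ν {ω | δ ≤ ‖F i ω - g ω‖} ^ (1 / p.toReal) :=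
        eLpNorm_le_ofReal_add_mul_measure_rpow hp ((hF i).sub hg) (hbd i) hδ.le
    _ ≤ ε / 2 + ε / 2 := add_le_add hδε hi
    _ = ε := ENNReal.add_halves ε

end BoundedConvergence

lemma tendstoInMeasure_of_tendsto_cimTopology {Ω ι : Type*} [MeasurableSpace Ω]
    {ν : Measure Ω} {l : Filter ι} {F : ι → Ω →ₘ[ν] Circle} {g : Ω →ₘ[ν] Circle}
    (h : @Tendsto _ _ F l (@nhds _ (cimTopology ν) g)) :
    TendstoInMeasure ν (fun i ω => (F i ω : ℂ)) l (fun ω => g ω) := by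
  rw [tendstoInMeasure_iff_norm]
  intro ε hε
  rw [ENNReal.tendsto_nhds_zero]
  intro η hη
  rcases eq_top_or_lt_top η with rfl | hη_top
  · exact .of_forall fun _ => le_top
  set δ := min ε η.toReal
  have hδ : 0 < δ := lt_min hε (ENNReal.toReal_pos hη.ne' hη_top.ne)
  let := cimTopology ν
  have hU : IsOpen {φ : Ω →ₘ[ν] Circle | ν {ω | δ ≤ ‖(φ ω : ℂ) - g ω‖} < ENNReal.ofReal δ} :=
    TopologicalSpace.isOpen_generateFrom_of_mem ⟨g, δ, hδ, rfl⟩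
  have hgU : g ∈ {φ : Ω →ₘ[ν] Circle | ν {ω | δ ≤ ‖(φ ω : ℂ) - g ω‖} < ENNReal.ofReal δ} := by
    simp [hδ, hδ.not_ge]
  filter_upwards [h (hU.mem_nhds hgU)] with i hi
  calc ν {ω | ε ≤ ‖(F i ω : ℂ) - g ω‖} ≤ ν {ω | δ ≤ ‖(F i ω : ℂ) - g ω‖} :=
        measure_mono fun ω (hω : ε ≤ _) => show δ ≤ _ from (min_le_left _ _).trans hω
    _ ≤ ENNReal.ofReal δ := hi.le
    _ ≤ η := ENNReal.ofReal_le_of_le_toReal (min_le_right _ _)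

section Circle

variable {Ω : Type*} [MeasurableSpace Ω] {ν : Measure Ω}

lemma eLpNorm_coe_circle [IsProbabilityMeasure ν] {p : ℝ≥0∞} (hp : p ≠ 0) (φ : Ω → Circle) :
    eLpNorm (fun ω => (φ ω : ℂ)) p ν = 1 := by
  rw [eLpNorm_congr_norm_ae (g := fun _ => (1 : ℝ)) (.of_forall fun _ => by simp [Circle.norm_coe]),
    eLpNorm_const _ hp (IsProbabilityMeasure.ne_zero ν)]
  simp

lemma stronglyMeasurable_coe_circle (φ : Ω →ₘ[ν] Circle) :
    StronglyMeasurable fun ω => (φ ω : ℂ) :=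
  continuous_subtype_val.comp_stronglyMeasurable φ.stronglyMeasurable

lemma memLp_coe_circle [IsFiniteMeasure ν] (p : ℝ≥0∞) (φ : Ω →ₘ[ν] Circle) :
    MemLp (fun ω => (φ ω : ℂ)) p ν :=
  .of_bound (stronglyMeasurable_coe_circle φ).aestronglyMeasurable 1
    (.of_forall fun _ => (Circle.norm_coe _).le)

lemma eLpNorm_mul_comp_sub_eq_eLpNorm_sub {T : Ω → Ω}
    (hT : Measure.QuasiMeasurePreserving T ν ν) (c : Ω → ℂ) {b φ : Ω → Circle}
    (hb : b =ᵐ[ν] fun ω => φ ω * (φ (T ω))⁻¹) {ξ : Ω → ℂ} (hξ : ξ =ᵐ[ν] fun ω => φ ω)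
    (p : ℝ≥0∞) :
    eLpNorm (fun ω => c ω * ξ (T ω) - ξ ω) p ν = eLpNorm (fun ω => c ω - b ω) p ν := by
  have hξT : ∀ᵐ ω ∂ν, ξ (T ω) = φ (T ω) := hT.ae_eq_comp hξ
  have hcob : ∀ᵐ ω ∂ν, c ω * ξ (T ω) - ξ ω = (c ω - b ω) * φ (T ω) := by
    filter_upwards [hb, hξ, hξT] with ω hbω hξω hξTω
    rw [hbω, hξω, hξTω, Circle.coe_mul, Circle.coe_inv]
    field_simp [Circle.coe_ne_zero]
  rw [eLpNorm_congr_ae hcob]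
  exact eLpNorm_congr_norm_ae (.of_forall fun ω => by simp [Circle.norm_coe])

end Circle

/-- If a 1-cocycle `c ∈ Z¹(σ;𝕋)` is the limit of a net of 1-coboundaries, then the
isometric representation `π_{p,σ,c}` of `Γ` on `L^p(Ω,ν)` admits a net of almost invariant
unit vectors. -/
theorem stmt5 {Γ : Type u} [Group Γ] {Ω : Type v} [MeasurableSpace Ω]
    (ν : MeasureTheory.Measure Ω) [IsProbabilityMeasure ν]
    (σ : PMPAction Γ Ω ν) (p : ℝ) (hp : 1 ≤ p)
    (c : Γ → (Ω →ₘ[ν] Circle))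
    (hlim : letI : TopologicalSpace (Ω →ₘ[ν] Circle) := cimTopology ν
      ∃ (ι : Type (max u v)) (l : Filter ι), l.NeBot ∧
        ∃ b : ι → Γ → (Ω →ₘ[ν] Circle), (∀ i, b i ∈ B1set σ) ∧ Tendsto b l (𝓝 c)) :
    haveI : Fact ((1 : ℝ≥0∞) ≤ ENNReal.ofReal p) :=
      ⟨by simpa using ENNReal.ofReal_le_ofReal hp⟩
    ∃ (κ : Type (max u v)) (m : Filter κ), m.NeBot ∧
      ∃ ξ : κ → Lp ℂ (ENNReal.ofReal p) ν,
        (∀ i, ‖ξ i‖ = 1) ∧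
        ∀ t : Γ, Tendsto
          (fun i => eLpNorm
            (fun ω => (c t ω : ℂ) * (ξ i) (σ.act t⁻¹ ω) - (ξ i) ω)
            (ENNReal.ofReal p) ν)
          m (𝓝 0) := by
  have hp' : 1 ≤ ENNReal.ofReal p := by simpa using ENNReal.ofReal_le_ofReal hp
  let := cimTopology ν
  obtain ⟨ι, l, hl, b, hb, htend⟩ := hlim
  choose φ hφ using fun i => (hb i).2
  let ξ i := (memLp_coe_circle (ENNReal.ofReal p) (φ i)).toLp
  refine ⟨ι, l, hl, ξ, fun i => ?_, fun t => ?_⟩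
  · rw [Lp.norm_toLp, eLpNorm_coe_circle (zero_lt_one.trans_le hp').ne', ENNReal.toReal_one]
  · have hbd (i : ι) (ω : Ω) : ‖(b i t ω : ℂ) - c t ω‖ ≤ 2 := by
      simpa [Circle.norm_coe, one_add_one_eq_two] using norm_sub_le (b i t ω : ℂ) (c t ω)
    have hconv := tendstoInMeasure_of_tendsto_cimTopology (tendsto_pi_nhds.1 htend t)
    refine (hconv.tendsto_eLpNorm_sub_of_bounded hp' ENNReal.ofReal_ne_top
      (fun i => stronglyMeasurable_coe_circle _) (stronglyMeasurable_coe_circle _) hbd).congr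
        fun i => ?_
    rw [eLpNorm_sub_comm, eLpNorm_mul_comp_sub_eq_eLpNorm_sub
      (σ.measurePreserving_act t⁻¹).quasiMeasurePreserving _ (hφ i t) (MemLp.coeFn_toLp _)]
    rfl
end

section
/- Let (Ω,𝓑,ν) be a diffuse standard probability space and 1 ≤ p < ∞. There exists a surjective linear isometry U of L^p(Ω,𝓑,ν) such that (1) the constant function 1_Ω lies in U(L^p_0(Ω,𝓑,ν)), and (2) the smallest σ-algebra making all functions in U(L^p_0(Ω,𝓑,ν)) measurable is 𝓑 (up to null sets). -/
/-!
Let `A` be a set with `ν A = 1/2` and `g = 1_A - 1_{Aᶜ}`, and let `U` be multiplication by `g`.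
Then `g` has mean zero and `U g = g² = 1`. The functions in `U(L^p_0)` are `𝓑`-measurable, and
`U` maps the centred indicator `1_S - ν S` to `g (1_S - ν S)`. For `E ⊆ A` with `ν E = 1/4`,
the function `g (1_E - 1/4)` takes the value `1/4` exactly off `A`, so `g` is measurable for the
generated σ-algebra up to null sets, and hence so is `1_S = g · g (1_S - ν S) + ν S`.
-/

open MeasureTheory Filter Topology ENNReal

variable {Ω : Type*} [MeasurableSpace Ω]

/-- The closed subspace `L^p_0(Ω,ν)` of `L^p(Ω,ν)` consisting of functions of mean zero. -/
noncomputable def Lp0 (p : ℝ≥0∞) [Fact (1 ≤ p)] (ν : MeasureTheory.Measure Ω)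
    [IsFiniteMeasure ν] : Submodule ℂ (Lp ℂ p ν) where
  carrier := {f | ∫ ω, f ω ∂ν = 0}
  zero_mem' := by
    simp only [Set.mem_setOf_eq]
    rw [integral_congr_ae (Lp.coeFn_zero ℂ p ν)]
    simp
  add_mem' := by
    intro f g hf hg
    simp only [Set.mem_setOf_eq] at *
    rw [integral_congr_ae (Lp.coeFn_add f g)]
    simp only [Pi.add_apply]
    rw [integral_add ((Lp.memLp f).integrable Fact.out) ((Lp.memLp g).integrable Fact.out),
      hf, hg, add_zero]
  smul_mem' := by
    intro a f hf
    simp only [Set.mem_setOf_eq] at *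
    rw [integral_congr_ae (Lp.coeFn_smul a f)]
    simp only [Pi.smul_apply]
    rw [integral_smul, hf, smul_zero]

namespace ProbabilityTheory

lemma continuous_cdf (μ : Measure ℝ) [IsProbabilityMeasure μ] [NullSingletonClass μ] :
    Continuous (cdf μ) := by
  refine continuous_iff_continuousAt.2 fun x ↦ ?_
  rw [(cdf μ).mono.continuousAt_iff_leftLim_eq_rightLim, (cdf μ).rightLim_eq]
  have h := (cdf μ).measure_singleton x
  rw [measure_cdf, measure_singleton, eq_comm, ENNReal.ofReal_eq_zero] at h
  linarith [(cdf μ).mono.leftLim_le (le_refl x)]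

lemma exists_cdf_eq (μ : Measure ℝ) [IsProbabilityMeasure μ] [NullSingletonClass μ] {t : ℝ}
    (ht : t ∈ Set.Ioo 0 1) : ∃ x, cdf μ x = t := by
  obtain ⟨a, ha⟩ := ((tendsto_cdf_atBot μ).eventually (eventually_lt_nhds ht.1)).exists
  obtain ⟨b, hb⟩ := ((tendsto_cdf_atTop μ).eventually (eventually_gt_nhds ht.2)).exists
  exact intermediate_value_univ a b (continuous_cdf μ) ⟨ha.le, hb.le⟩

end ProbabilityTheory

lemma MeasureTheory.Measure.nullSingletonClass_map_of_injective {α β : Type*} [MeasurableSpace α] [MeasurableSpace β]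
    [MeasurableSingletonClass β] {f : α → β} (hf : Measurable f) (hinj : Function.Injective f)
    (μ : Measure α) [NullSingletonClass μ] : NullSingletonClass (μ.map f) where
  measure_singleton x := by
    rw [Measure.map_apply hf (measurableSet_singleton x)]
    exact Set.Subsingleton.measure_zero (fun a ha b hb ↦ hinj (ha.trans hb.symm)) μ

open ProbabilityTheory in
lemma exists_measurableSet_subset_measureReal_eq [StandardBorelSpace Ω] (ν : Measure Ω) [IsProbabilityMeasure ν] [NullSingletonClass ν]
    {s t : ℝ} (hs : 0 < s) (hst : s ≤ t) (ht : t < 1) :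
    ∃ E A, MeasurableSet E ∧ MeasurableSet A ∧ E ⊆ A ∧ ν.real E = s ∧ ν.real A = t := by
  obtain ⟨X, hX⟩ := exists_measurableEmbedding_real Ω
  have := Measure.isProbabilityMeasure_map (μ := ν) hX.measurable.aemeasurable
  have := Measure.nullSingletonClass_map_of_injective hX.measurable hX.injective ν
  obtain ⟨a, ha⟩ := exists_cdf_eq (ν.map X) ⟨hs, hst.trans_lt ht⟩
  obtain ⟨b, hb⟩ := exists_cdf_eq (ν.map X) ⟨hs.trans_le hst, ht⟩
  have hcdf : ∀ x, ν.real (X ⁻¹' Set.Iic x) = cdf (ν.map X) x := fun x ↦ by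
    rw [cdf_eq_real, map_measureReal_apply hX.measurable measurableSet_Iic]
  refine ⟨X ⁻¹' Set.Iic (min a b), X ⁻¹' Set.Iic b, hX.measurable measurableSet_Iic,
    hX.measurable measurableSet_Iic, Set.preimage_mono (Set.Iic_subset_Iic.2 (min_le_right a b)),
    ?_, by rw [hcdf, hb]⟩
  rw [hcdf, (monotone_cdf _).map_min, ha, hb, min_eq_left hst]

open ComplexConjugate

namespace MeasureTheory.Lp

variable {α 𝕜 E : Type*} [RCLike 𝕜] [NormedAddCommGroup E] [NormedSpace 𝕜 E]
  {m : MeasurableSpace α} {μ : Measure α} {p : ℝ≥0∞} {g : α → 𝕜}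

lemma memLp_smul_of_norm_eq_one (hg : AEStronglyMeasurable g μ) (hg1 : ∀ᵐ x ∂μ, ‖g x‖ = 1)
    (f : Lp E p μ) : MemLp (g • ⇑f) p μ :=
  (Lp.memLp f).of_le (hg.smul (Lp.aestronglyMeasurable f)) <| by
    filter_upwards [hg1] with x hx
    simp [norm_smul, hx]

variable (p) in
noncomputable def smulOfNormEqOneₗ (hg : AEStronglyMeasurable g μ) (hg1 : ∀ᵐ x ∂μ, ‖g x‖ = 1) :
    Lp E p μ →ₗ[𝕜] Lp E p μ where
  toFun f := (memLp_smul_of_norm_eq_one hg hg1 f).toLp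
  map_add' f₁ f₂ := by
    rw [← MemLp.toLp_add]
    refine MemLp.toLp_congr _ _ ?_
    filter_upwards [AEEqFun.coeFn_add f₁.val f₂.val] with x hx
    simp [hx, smul_add]
  map_smul' c f := by
    rw [RingHom.id_apply, ← MemLp.toLp_const_smul]
    refine MemLp.toLp_congr _ _ ?_
    filter_upwards [Lp.coeFn_smul c f] with x hx
    simp [hx, smul_comm (g x) c]

lemma coeFn_smulOfNormEqOneₗ (hg : AEStronglyMeasurable g μ) (hg1 : ∀ᵐ x ∂μ, ‖g x‖ = 1)
    (f : Lp E p μ) : smulOfNormEqOneₗ p hg hg1 f =ᵐ[μ] g • ⇑f :=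
  MemLp.coeFn_toLp (memLp_smul_of_norm_eq_one hg hg1 f)

lemma norm_smulOfNormEqOneₗ (hg : AEStronglyMeasurable g μ) (hg1 : ∀ᵐ x ∂μ, ‖g x‖ = 1)
    (f : Lp E p μ) : ‖smulOfNormEqOneₗ p hg hg1 f‖ = ‖f‖ := by
  rw [Lp.norm_def, Lp.norm_def, eLpNorm_congr_ae (coeFn_smulOfNormEqOneₗ hg hg1 f)]
  congr 1
  refine eLpNorm_congr_norm_ae ?_
  filter_upwards [hg1] with x hx
  simp [norm_smul, hx]

lemma smulOfNormEqOneₗ_smulOfNormEqOneₗ {h : α → 𝕜} (hg : AEStronglyMeasurable g μ)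
    (hg1 : ∀ᵐ x ∂μ, ‖g x‖ = 1) (hh : AEStronglyMeasurable h μ) (hh1 : ∀ᵐ x ∂μ, ‖h x‖ = 1)
    (hhg : ∀ᵐ x ∂μ, h x * g x = 1) (f : Lp E p μ) :
    smulOfNormEqOneₗ p hh hh1 (smulOfNormEqOneₗ p hg hg1 f) = f := by
  refine Lp.ext ?_
  filter_upwards [coeFn_smulOfNormEqOneₗ hh hh1 (smulOfNormEqOneₗ p hg hg1 f),
    coeFn_smulOfNormEqOneₗ hg hg1 f, hhg] with x h₁ h₂ hx
  rw [h₁, Pi.smul_apply', h₂, Pi.smul_apply', smul_smul, hx, one_smul]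

variable [Fact (1 ≤ p)]

noncomputable def smulOfNormEqOneₗᵢ (hg : AEStronglyMeasurable g μ) (hg1 : ∀ᵐ x ∂μ, ‖g x‖ = 1) :
    Lp E p μ ≃ₗᵢ[𝕜] Lp E p μ where
  toLinearEquiv :=
    have hg' : AEStronglyMeasurable (fun x ↦ conj (g x)) μ :=
      RCLike.continuous_conj.comp_aestronglyMeasurable hg
    have hg1' : ∀ᵐ x ∂μ, ‖conj (g x)‖ = 1 := by simpa only [RCLike.norm_conj] using hg1
    have hconj : ∀ᵐ x ∂μ, conj (g x) * g x = 1 := by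
      filter_upwards [hg1] with x hx
      simp [RCLike.conj_mul, hx]
    .ofLinearMap (smulOfNormEqOneₗ p hg hg1) (smulOfNormEqOneₗ p hg' hg1')
      (LinearMap.ext fun f ↦ smulOfNormEqOneₗ_smulOfNormEqOneₗ hg' hg1' hg hg1
        (by simpa only [mul_comm] using hconj) f)
      (LinearMap.ext fun f ↦ smulOfNormEqOneₗ_smulOfNormEqOneₗ hg hg1 hg' hg1' hconj f)
  norm_map' := norm_smulOfNormEqOneₗ hg hg1

lemma coeFn_smulOfNormEqOneₗᵢ (hg : AEStronglyMeasurable g μ) (hg1 : ∀ᵐ x ∂μ, ‖g x‖ = 1)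
    (f : Lp E p μ) : smulOfNormEqOneₗᵢ hg hg1 f =ᵐ[μ] g • ⇑f :=
  coeFn_smulOfNormEqOneₗ hg hg1 f

end MeasureTheory.Lp

section CenteredIndicator

variable {p : ℝ≥0∞} {ν : Measure Ω} [IsProbabilityMeasure ν] {S : Set Ω}

lemma integral_indicator_one_sub_measureReal (hS : MeasurableSet S) :
    ∫ ω, (S.indicator 1 ω - (ν.real S : ℂ)) ∂ν = 0 := by
  rw [integral_sub ((integrable_const 1).indicator hS) (integrable_const _)]
  simp [integral_indicator hS]

variable (p ν) in
lemma exists_mem_Lp0_ae_eq_indicator_one_sub_measureReal [Fact (1 ≤ p)] (hS : MeasurableSet S) :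
    ∃ f ∈ Lp0 p ν, f =ᵐ[ν] fun ω ↦ S.indicator 1 ω - (ν.real S : ℂ) := by
  have hmem : MemLp (fun ω ↦ S.indicator 1 ω - (ν.real S : ℂ)) p ν :=
    (memLp_indicator_const p hS 1 (Or.inr (measure_ne_top ν S))).sub (memLp_const _)
  refine ⟨hmem.toLp _, ?_, hmem.coeFn_toLp⟩
  show ∫ ω, _ ∂ν = 0
  rw [integral_congr_ae hmem.coeFn_toLp]
  exact integral_indicator_one_sub_measureReal hS

end CenteredIndicator

section GeneratedSigmaAlgebra

variable {α E : Type*} [NormedAddCommGroup E] [MeasurableSpace E]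
  {m : MeasurableSpace α} {μ : Measure α} {p : ℝ≥0∞}

lemma iSup_comap_coeFn_le [BorelSpace E] (s : Set (Lp E p μ)) :
    ⨆ f ∈ s, MeasurableSpace.comap (fun x ↦ f x) inferInstance ≤ m :=
  iSup₂_le fun f _ ↦ (Lp.stronglyMeasurable f).measurable.comap_le

lemma measurable_coeFn_iSup_comap {s : Set (Lp E p μ)} {f : Lp E p μ} (hf : f ∈ s) :
    Measurable[⨆ f ∈ s, MeasurableSpace.comap (fun x ↦ f x) inferInstance] f :=
  Measurable.of_comap_le (le_iSup₂ (f := fun (f : Lp E p μ) _ ↦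
    MeasurableSpace.comap (fun x ↦ f x) inferInstance) f hf)

end GeneratedSigmaAlgebra

lemma exists_measurableSet_measure_symmDiff_eq_zero {α : Type*} {m m₀ : MeasurableSpace α}
    {μ : Measure[m₀] α} {S : Set α} (hS : AEStronglyMeasurable[m] (S.indicator (1 : α → ℂ)) μ) :
    ∃ B, MeasurableSet[m] B ∧ μ (symmDiff S B) = 0 := by
  obtain ⟨φ, hφ, hae⟩ := hS
  refine ⟨φ ⁻¹' {1}, hφ.measurable (measurableSet_singleton 1), measure_mono_null ?_ (ae_iff.1 hae)⟩
  rintro x (⟨hxS, hxB⟩ | ⟨hxB, hxS⟩)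
  · simpa [hxS, eq_comm] using hxB
  · simp_all

lemma aestronglyMeasurable_indicator_of_forall_sign_mul {α : Type*} {m m₀ : MeasurableSpace α}
    {μ : Measure[m₀] α} {g : α → ℂ} {E : Set α} (hg : ∀ x, g x = 1 ∨ g x = -1)
    (hgE : ∀ x ∈ E, g x = 1) (hE : MeasurableSet[m₀] E) (hE₀ : μ.real E ≠ 0)
    (hE₁ : μ.real E ≠ 1 / 2)
    (h : ∀ S, MeasurableSet[m₀] S →
      AEStronglyMeasurable[m] (fun x ↦ g x * (S.indicator 1 x - μ.real S)) μ)
    {S : Set α} (hS : MeasurableSet[m₀] S) :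
    AEStronglyMeasurable[m] (S.indicator (1 : α → ℂ)) μ := by
  set c : ℂ := (μ.real E : ℂ)
  have hc₀ : -c ≠ c := fun h ↦
    hE₀ (Complex.ofReal_injective (by push_cast; linear_combination -h / 2))
  have hc₁ : 1 - c ≠ c := fun h ↦
    hE₁ (Complex.ofReal_injective (by push_cast; linear_combination -h / 2))
  -- `g (1_E - c)` equals `c` exactly where `g = -1`
  have hdecode : ∀ x, g x = if g x * (E.indicator 1 x - c) = c then -1 else 1 := by
    intro x
    by_cases hx : x ∈ E
    · simp [hgE x hx, hx, hc₁]
    · rcases hg x with h | h <;> simp [h, hx, hc₀]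
  have hgm : AEStronglyMeasurable[m] g μ := by
    obtain ⟨φ, hφ, hae⟩ := h E hE
    refine ⟨fun x ↦ if φ x = c then -1 else 1,
      (Measurable.ite (hφ.measurable (measurableSet_singleton c)) measurable_const
        measurable_const).stronglyMeasurable, ?_⟩
    filter_upwards [hae] with x hx
    rw [hdecode x, hx]
  have hg2 : ∀ x, g x * g x = 1 := fun x ↦ by rcases hg x with h | h <;> simp [h]
  have hind : S.indicator 1 = fun x ↦ g x * (g x * (S.indicator 1 x - μ.real S)) + μ.real S := by
    ext x
    rw [← mul_assoc, hg2, one_mul, sub_add_cancel]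
  rw [hind]
  exact (hgm.mul (h S hS)).add aestronglyMeasurable_const

lemma exists_measurableSet_iSup_comap_measure_symmDiff_eq_zero {p : ℝ≥0∞} [Fact (1 ≤ p)]
    {ν : Measure Ω} [IsProbabilityMeasure ν] {U : Lp ℂ p ν → Lp ℂ p ν} {g : Ω → ℂ}
    (hU : ∀ f, U f =ᵐ[ν] fun ω ↦ g ω * f ω) (hg : ∀ ω, g ω = 1 ∨ g ω = -1) {E : Set Ω}
    (hgE : ∀ ω ∈ E, g ω = 1) (hE : MeasurableSet E) (hE₀ : ν.real E ≠ 0)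
    (hE₁ : ν.real E ≠ 1 / 2) {S : Set Ω} (hS : MeasurableSet S) :
    ∃ B, MeasurableSet[⨆ f ∈ U '' (Lp0 p ν : Set (Lp ℂ p ν)),
      MeasurableSpace.comap (fun ω ↦ f ω) inferInstance] B ∧ ν (symmDiff S B) = 0 := by
  refine exists_measurableSet_measure_symmDiff_eq_zero <|
    aestronglyMeasurable_indicator_of_forall_sign_mul hg hgE hE hE₀ hE₁ (fun S hS ↦ ?_) hS
  obtain ⟨f, hf, hfS⟩ := exists_mem_Lp0_ae_eq_indicator_one_sub_measureReal p ν hS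
  refine (measurable_coeFn_iSup_comap (Set.mem_image_of_mem U hf)).stronglyMeasurable
    |>.aestronglyMeasurable.congr ((hU f).trans ?_)
  filter_upwards [hfS] with ω hω
  rw [hω]

/-- For a diffuse standard probability space `(Ω,𝓑,ν)` and `1 ≤ p < ∞`, there is a
surjective linear isometry `U` of `L^p(Ω,𝓑,ν)` such that `1_Ω ∈ U(L^p_0(Ω,𝓑,ν))` and the
smallest σ-algebra making all functions in `U(L^p_0(Ω,𝓑,ν))` measurable is `𝓑`, up to
`ν`-null sets. -/
theorem stmt9 {Ω' : Type*} [𝓑 : MeasurableSpace Ω'] [StandardBorelSpace Ω']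
    (ν : MeasureTheory.Measure Ω') [IsProbabilityMeasure ν] [MeasureTheory.NullSingletonClass ν]
    (p : ℝ) (hp : 1 ≤ p) :
    haveI : Fact ((1 : ℝ≥0∞) ≤ ENNReal.ofReal p) :=
      ⟨by simpa using ENNReal.ofReal_le_ofReal hp⟩
    ∃ U : Lp ℂ (ENNReal.ofReal p) ν ≃ₗᵢ[ℂ] Lp ℂ (ENNReal.ofReal p) ν,
      (∃ f ∈ Lp0 (ENNReal.ofReal p) ν, U f = Lp.const (ENNReal.ofReal p) ν (1 : ℂ)) ∧
      -- the σ-algebra generated by the functions in `U(L^p_0)` agrees with `𝓑`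
      -- up to `ν`-null sets
      (letI m₀ : MeasurableSpace Ω' :=
        ⨆ f ∈ (⇑U '' (Lp0 (ENNReal.ofReal p) ν : Set (Lp ℂ (ENNReal.ofReal p) ν))),
          MeasurableSpace.comap (fun ω => f ω) inferInstance
       (∀ A : Set Ω', MeasurableSet[m₀] A →
          ∃ B : Set Ω', MeasurableSet[𝓑] B ∧ ν (symmDiff A B) = 0) ∧
       (∀ A : Set Ω', MeasurableSet[𝓑] A →
          ∃ B : Set Ω', MeasurableSet[m₀] B ∧ ν (symmDiff A B) = 0)) := by
  have : Fact ((1 : ℝ≥0∞) ≤ ENNReal.ofReal p) := ⟨by simpa using ENNReal.ofReal_le_ofReal hp⟩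
  obtain ⟨E, A, hE, hA, hEA, hνE, hνA⟩ :=
    exists_measurableSet_subset_measureReal_eq ν (s := 1 / 4) (t := 1 / 2)
      (by norm_num) (by norm_num) (by norm_num)
  -- `g = 1_A - 1_{Aᶜ}`, written as twice the centred indicator of `A`
  set g : Ω' → ℂ := fun ω ↦ 2 * (A.indicator 1 ω - ν.real A)
  have hg : ∀ ω, g ω = 1 ∨ g ω = -1 := fun ω ↦ by
    by_cases hω : ω ∈ A <;> norm_num [g, hω, hνA]
  have hgm : Measurable g := by fun_prop (disch := exact hA)
  have hg1 : ∀ᵐ ω ∂ν, ‖g ω‖ = 1 := ae_of_all _ fun ω ↦ by rcases hg ω with h | h <;> simp [h]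
  set U := Lp.smulOfNormEqOneₗᵢ (E := ℂ) (p := ENNReal.ofReal p) hgm.aestronglyMeasurable hg1
  have hU : ∀ f, U f =ᵐ[ν] fun ω ↦ g ω * f ω := Lp.coeFn_smulOfNormEqOneₗᵢ _ _
  refine ⟨U, ?_, fun S hS ↦ ⟨S, iSup_comap_coeFn_le _ S hS, by simp⟩, fun S hS ↦ ?_⟩
  · obtain ⟨f, hf, hfA⟩ :=
      exists_mem_Lp0_ae_eq_indicator_one_sub_measureReal (ENNReal.ofReal p) ν hA
    refine ⟨(2 : ℂ) • f, Submodule.smul_mem _ _ hf, Lp.ext ?_⟩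
    filter_upwards [hU ((2 : ℂ) • f), Lp.coeFn_smul (2 : ℂ) f, hfA, Lp.coeFn_const _ ν (1 : ℂ)]
      with ω h₁ h₂ h₃ h₄
    rw [h₁, h₂, h₄, Pi.smul_apply, h₃]
    change g ω * g ω = 1
    rcases hg ω with h | h <;> simp [h]
  · exact exists_measurableSet_iSup_comap_measure_symmDiff_eq_zero hU hg
      (fun ω hω ↦ by norm_num [g, hEA hω, hνA]) hE (by rw [hνE]; norm_num)
      (by rw [hνE]; norm_num) hS
end
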